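/- Let (V,E) be a temporal graph over timestamps {0,…,T}, let α ∈ [0,1], and let u ≠ v be vertices of V. Then the shortest-fastest-path distance d(u,v) equals the minimum, over all pairs of timestamps t_i, t_j ∈ {0,…,T}, of the shortest-path distance in the transformed graph G' from the replica (u,t_i) to the replica (v,t_j) (both minima taken in ℝ≥0∞, equal to ∞ when no path exists). -/

import Mathlib

open scoped ENNReal BigOperators

variable {V : Type*}

/-- `p` is a temporal path from `u` to `v` with edges in `E`:
a nonempty list of timestamped edges, consecutive in space and
with nondecreasing timestamps. -/
def IsTempPath (E : Set (V × V × ℕ)) (u v : V) (p : List (V × V × ℕ)) : Prop :=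
  p ≠ [] ∧ (∀ e ∈ p, e ∈ E) ∧
    List.Chain' (fun e f : V × V × ℕ => e.2.1 = f.1 ∧ e.2.2 ≤ f.2.2) p ∧
    p.head?.map Prod.fst = some u ∧
    p.getLast?.map (fun e => e.2.1) = some v

/-- Timestamp of the first edge of a temporal path. -/
def firstTime (p : List (V × V × ℕ)) : ℕ := (p.head?.map (fun e => e.2.2)).getD 0

/-- Timestamp of the last edge of a temporal path. -/
def lastTime (p : List (V × V × ℕ)) : ℕ := (p.getLast?.map (fun e => e.2.2)).getD 0

/-- Cost `L_α(p) = α·(number of edges) + (1-α)·(t_n - t_0)` of a temporal path. -/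
noncomputable def costL (α : ℝ) (p : List (V × V × ℕ)) : ℝ :=
  α * p.length + (1 - α) * ((lastTime p : ℝ) - (firstTime p : ℝ))

/-- Shortest-fastest-path distance: infimum of `L_α` over temporal paths from `u` to `v`,
taken in `ℝ≥0∞` (so `∞` if no temporal path exists). -/
noncomputable def sfpDist (α : ℝ) (E : Set (V × V × ℕ)) (u v : V) : ℝ≥0∞ :=
  sInf {c : ℝ≥0∞ | ∃ p, IsTempPath E u v p ∧ c = ENNReal.ofReal (costL α p)}

/-- Adjacency of the transformed graph `G'` on `V × {0,…,T}`:
waiting edges `(v,t) → (v,t+1)` and snapshot edges `(u,t) → (v,t)` for `(u,v,t) ∈ E`. -/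
def TransAdj (E : Set (V × V × ℕ)) (T : ℕ) : V × ℕ → V × ℕ → Prop := fun a b =>
  (a.1 = b.1 ∧ b.2 = a.2 + 1 ∧ b.2 ≤ T) ∨ ((a.1, b.1, a.2) ∈ E ∧ b.2 = a.2)

/-- Weight of an edge of the transformed graph: `α` for snapshot edges (same timestamp),
`1 - α` for waiting edges. -/
noncomputable def transWeight (α : ℝ) (a b : V × ℕ) : ℝ := if a.2 = b.2 then α else 1 - α

/-- Length `ℓ` of a path in the transformed graph (given as its list of visited vertices):
the sum of the weights of its edges. -/
noncomputable def transLen (α : ℝ) (p : List (V × ℕ)) : ℝ :=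
  ((p.zip p.tail).map fun ab => transWeight α ab.1 ab.2).sum

/-- `p` is a directed path in the transformed graph from `x` to `y`,
given as its (nonempty) list of visited vertices. -/
def IsTransPath (E : Set (V × V × ℕ)) (T : ℕ) (x y : V × ℕ) (p : List (V × ℕ)) : Prop :=
  p ≠ [] ∧ List.Chain' (TransAdj E T) p ∧ p.head? = some x ∧ p.getLast? = some y

/-- Projection of a transformed-graph path to a list of timestamped edges:
delete the waiting edges and read each snapshot edge `((x,t),(y,t))` as `(x,y,t)`. -/
def project (p : List (V × ℕ)) : List (V × V × ℕ) :=
  ((p.zip p.tail).filter fun ab => ab.1.2 == ab.2.2).map fun ab => (ab.1.1, ab.2.1, ab.1.2)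

/-- Shortest-path distance in the transformed graph, in `ℝ≥0∞`. -/
noncomputable def transDist (E : Set (V × V × ℕ)) (T : ℕ) (α : ℝ) (x y : V × ℕ) : ℝ≥0∞ :=
  sInf {c : ℝ≥0∞ | ∃ p, IsTransPath E T x y p ∧ c = ENNReal.ofReal (transLen α p)}

/-- Shortest-path distance (number of edges) in a static graph with adjacency `A`,
in `ℝ≥0∞`: the infimum of the number of edges over (nonempty) walks from `u` to `v`. -/
noncomputable def staticDist (A : V → V → Prop) (u v : V) : ℝ≥0∞ :=
  sInf {c : ℝ≥0∞ | ∃ p : List (V × V), p ≠ [] ∧ (∀ e ∈ p, A e.1 e.2) ∧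
    List.Chain' (fun e f : V × V => e.2 = f.1) p ∧
    p.head?.map Prod.fst = some u ∧ p.getLast?.map Prod.snd = some v ∧
    c = (p.length : ℝ≥0∞)}

/-- Per-pair temporal inefficiency `[(1 - α/d(v,u)) + (1 - α/d(u,v))]/2`,
with the convention `α/∞ = 0` (via `ENNReal.toReal`). -/
noncomputable def perPairIneff (α : ℝ) (E : Set (V × V × ℕ)) (u v : V) : ℝ :=
  ((1 - α / (sfpDist α E v u).toReal) + (1 - α / (sfpDist α E u v).toReal)) / 2

/-- Temporal network inefficiency: the sum of the per-pair inefficiency over unordered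
pairs of distinct vertices (the summand is symmetric, so we sum over ordered pairs and
halve). -/
noncomputable def tempIneff (α : ℝ) (E : Set (V × V × ℕ)) [Fintype V] [DecidableEq V] : ℝ :=
  (∑ q ∈ Finset.univ.offDiag, perPairIneff α E (Prod.fst q) (Prod.snd q)) / 2

/-- Temporal edges of the subgraph induced by `S`. -/
def inducedE (E : Set (V × V × ℕ)) (S : Set V) : Set (V × V × ℕ) :=
  {e ∈ E | e.1 ∈ S ∧ e.2.1 ∈ S}

/-- Temporal network inefficiency of the temporal subgraph induced by a finite set `S`. -/
noncomputable def tempIneffOn (α : ℝ) (E : Set (V × V × ℕ)) [DecidableEq V]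
    (S : Finset V) : ℝ :=
  (∑ q ∈ S.offDiag, perPairIneff α (inducedE E ↑S) (Prod.fst q) (Prod.snd q)) / 2

/-- Static network inefficiency `Σ_{u ≠ v ∈ S} (1 - 1/d_{G[S]}(u,v))` (unordered pairs,
with `1/∞ = 0`) of the subgraph induced by `S` in the static graph with adjacency `A`. -/
noncomputable def staticIneffOn (A : V → V → Prop) [DecidableEq V] (S : Finset V) : ℝ :=
  (∑ q ∈ S.offDiag,
    (1 - 1 / (staticDist (fun x y => A x y ∧ x ∈ S ∧ y ∈ S)
      (Prod.fst q) (Prod.snd q)).toReal)) / 2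

/-!
A path in `G'` consists of waiting edges, one per time step, and snapshot edges, so its length
is `α · (number of snapshot edges) + (1 - α) · (elapsed time)`. Deleting its waiting edges
leaves a temporal walk that departs no earlier and arrives no later than the `G'`-path, hence
costs no more; between distinct vertices that walk is nonempty, i.e. a temporal path.
Conversely, inserting waiting edges between consecutive edges of a temporal path turns it into
a `G'`-path of the same length.
-/

section

variable {E : Set (V × V × ℕ)} {T : ℕ}

def TempFollows (e f : V × V × ℕ) : Prop := e.2.1 = f.1 ∧ e.2.2 ≤ f.2.2

def loopAt (x : V × ℕ) : V × V × ℕ := (x.1, x.1, x.2)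

/-- `q` is a (possibly empty) temporal walk that leaves `x.1` no earlier than `x.2` and reaches
`y.1` no later than `y.2`: bracketing `q` by the loops `(x.1, x.1, x.2)` and `(y.1, y.1, y.2)`
encodes both conditions, and for `q = []` it says `x.1 = y.1 ∧ x.2 ≤ y.2`. -/
def IsTempWalk (E : Set (V × V × ℕ)) (x y : V × ℕ) (q : List (V × V × ℕ)) : Prop :=
  (∀ e ∈ q, e ∈ E) ∧ (loopAt x :: q ++ [loopAt y]).IsChain TempFollows

lemma isTempWalk_nil_iff {x y : V × ℕ} : IsTempWalk E x y [] ↔ x.1 = y.1 ∧ x.2 ≤ y.2 := by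
  simp [IsTempWalk, TempFollows, loopAt]

lemma isTempWalk_cons_iff {x y : V × ℕ} {e : V × V × ℕ} {q : List (V × V × ℕ)} :
    IsTempWalk E x y (e :: q) ↔
      e ∈ E ∧ x.1 = e.1 ∧ x.2 ≤ e.2.2 ∧ IsTempWalk E (e.2.1, e.2.2) y q := by
  have hswap : ∀ {a b : V × V × ℕ}, a.2 = b.2 → ((b :: (q ++ [loopAt y])).IsChain TempFollows ↔
      (a :: (q ++ [loopAt y])).IsChain TempFollows) :=
    fun h => ⟨List.IsChain.imp_head (by simp [TempFollows, h]),
      List.IsChain.imp_head (by simp [TempFollows, h])⟩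
  simp only [IsTempWalk, List.cons_append, List.isChain_cons_cons, List.forall_mem_cons,
    hswap (show (loopAt (e.2.1, e.2.2)).2 = e.2 from rfl)]
  simp only [TempFollows, loopAt]
  tauto

lemma IsTempWalk.of_earlier {x y z : V × ℕ} {q : List (V × V × ℕ)}
    (h : IsTempWalk E z y q) (h₁ : x.1 = z.1) (h₂ : x.2 ≤ z.2) : IsTempWalk E x y q :=
  ⟨h.1, h.2.imp_head fun hw => ⟨h₁.trans hw.1, h₂.trans hw.2⟩⟩

lemma isTempWalk_iff_isTempPath {u v : V} {s t : ℕ} {q : List (V × V × ℕ)} (hq : q ≠ []) :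
    IsTempWalk E (u, s) (v, t) q ↔ IsTempPath E u v q ∧ s ≤ firstTime q ∧ lastTime q ≤ t := by
  obtain ⟨e, he⟩ : ∃ e, q.head? = some e := Option.isSome_iff_exists.1 (by simpa using hq)
  obtain ⟨f, hf⟩ : ∃ f, q.getLast? = some f := Option.isSome_iff_exists.1 (by simpa using hq)
  have hhead : (q ++ [loopAt (v, t)]).head? = some e := by simp [List.head?_append, he]
  rw [IsTempWalk, List.cons_append, List.isChain_cons, List.isChain_append, hhead]
  simp only [IsTempPath, firstTime, lastTime, hf, he, List.isChain_singleton, Option.mem_def,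
    Option.some.injEq, List.head?_cons, Option.map_some, Option.getD_some, forall_eq',
    TempFollows, loopAt]
  constructor
  · rintro ⟨hE, ⟨hu, hs⟩, hc, -, hv, ht⟩
    exact ⟨⟨hq, hE, hc, hu.symm, hv⟩, hs, ht⟩
  · rintro ⟨⟨-, hE, hc, hu, hv⟩, hs, ht⟩
    exact ⟨hE, ⟨hu.symm, hs⟩, hc, trivial, hv, ht⟩

lemma firstTime_le {q : List (V × V × ℕ)} (hq : q ≠ []) (h : ∀ e ∈ q, e.2.2 ≤ T) :
    firstTime q ≤ T := by
  simpa [firstTime, List.head?_eq_some_head hq] using h _ (List.head_mem hq)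

lemma lastTime_le {q : List (V × V × ℕ)} (hq : q ≠ []) (h : ∀ e ∈ q, e.2.2 ≤ T) :
    lastTime q ≤ T := by
  simpa [lastTime, List.getLast?_eq_some_getLast hq] using h _ (List.getLast_mem hq)

lemma project_cons_cons (a b : V × ℕ) (l : List (V × ℕ)) :
    project (a :: b :: l) =
      (if a.2 = b.2 then [(a.1, b.1, a.2)] else []) ++ project (b :: l) := by
  by_cases h : a.2 = b.2 <;> simp [project, h]

lemma transLen_cons_cons (α : ℝ) (a b : V × ℕ) (l : List (V × ℕ)) :
    transLen α (a :: b :: l) = transWeight α a b + transLen α (b :: l) := by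
  simp [transLen]

lemma IsTransPath.exists_eq_cons {x y : V × ℕ} {p : List (V × ℕ)}
    (h : IsTransPath E T x y p) : ∃ l, p = x :: l := by
  obtain ⟨-, -, hx, -⟩ := h
  cases p with
  | nil => simp at hx
  | cons a l => exact ⟨l, by simp_all⟩

lemma isTransPath_singleton (y : V × ℕ) : IsTransPath E T y y [y] :=
  ⟨List.cons_ne_nil y [], .singleton y, rfl, rfl⟩

lemma isTransPath_cons_cons_iff {x y z : V × ℕ} {l : List (V × ℕ)} :
    IsTransPath E T x y (x :: z :: l) ↔ TransAdj E T x z ∧ IsTransPath E T z y (z :: l) := by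
  simp [IsTransPath, List.Chain', List.getLast?_cons_cons, and_assoc]

lemma IsTransPath.cons {x y z : V × ℕ} {p : List (V × ℕ)} (hxz : TransAdj E T x z)
    (h : IsTransPath E T z y p) : IsTransPath E T x y (x :: p) := by
  obtain ⟨l, rfl⟩ := h.exists_eq_cons
  exact isTransPath_cons_cons_iff.2 ⟨hxz, h⟩

@[elab_as_elim]
lemma IsTransPath.induction_on {y : V × ℕ} {P : V × ℕ → List (V × ℕ) → Prop}
    {x : V × ℕ} {p : List (V × ℕ)} (h : IsTransPath E T x y p) (last : P y [y])
    (cons : ∀ x z l, TransAdj E T x z → IsTransPath E T z y (z :: l) → P z (z :: l) →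
      P x (x :: z :: l)) :
    P x p := by
  obtain ⟨l, rfl⟩ := h.exists_eq_cons
  induction l generalizing x with
  | nil =>
    obtain rfl : x = y := by simpa [IsTransPath] using h.2.2.2
    exact last
  | cons z l ih =>
    obtain ⟨hxz, hz⟩ := isTransPath_cons_cons_iff.1 h
    exact cons x z l hxz hz (ih hz)

lemma IsTransPath.transLen_eq {x y : V × ℕ} {p : List (V × ℕ)} (h : IsTransPath E T x y p)
    (α : ℝ) :
    transLen α p = α * (project p).length + (1 - α) * ((y.2 : ℝ) - x.2) := by
  refine h.induction_on (by simp [transLen, project]) ?_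
  rintro x z l (⟨-, hz, -⟩ | ⟨-, hz⟩) - ih <;>
  · simp only [transLen_cons_cons, project_cons_cons, transWeight, ih, hz, Nat.left_eq_add,
      one_ne_zero, ↓reduceIte, List.cons_append, List.nil_append, List.length_cons, Nat.cast_add,
      Nat.cast_one]
    ring

lemma IsTransPath.isTempWalk_project {x y : V × ℕ} {p : List (V × ℕ)}
    (h : IsTransPath E T x y p) : IsTempWalk E x y (project p) := by
  refine h.induction_on (isTempWalk_nil_iff.2 ⟨rfl, le_rfl⟩) ?_
  rintro x z l (⟨hxz, hz, -⟩ | ⟨hE, hz⟩) - ih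
  · rw [project_cons_cons, if_neg (show x.2 ≠ z.2 by omega), List.nil_append]
    exact ih.of_earlier hxz (by omega)
  · rw [project_cons_cons, if_pos hz.symm, List.singleton_append, isTempWalk_cons_iff]
    exact ⟨hE, rfl, le_rfl, by rwa [← hz]⟩

lemma project_cons_of_isTransPath {x y z : V × ℕ} {p : List (V × ℕ)}
    (h : IsTransPath E T z y p) :
    project (x :: p) = (if x.2 = z.2 then [(x.1, z.1, x.2)] else []) ++ project p := by
  obtain ⟨l, rfl⟩ := h.exists_eq_cons
  exact project_cons_cons x z l

lemma IsTransPath.exists_wait_prefix {x y z : V × ℕ} {p : List (V × ℕ)}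
    (h : IsTransPath E T z y p) (h₁ : x.1 = z.1) (h₂ : x.2 ≤ z.2) (hz : z.2 ≤ T) :
    ∃ p', IsTransPath E T x y p' ∧ project p' = project p := by
  obtain ⟨n, hn⟩ := Nat.exists_eq_add_of_le h₂
  induction n generalizing x with
  | zero => exact ⟨p, by rwa [Prod.ext h₁ (by simpa using hn.symm)], rfl⟩
  | succ n ih =>
    obtain ⟨p', hp', hproj⟩ := ih (x := (x.1, x.2 + 1)) h₁ (by omega) (by simp; omega)
    have hwait : TransAdj E T x (x.1, x.2 + 1) := Or.inl ⟨rfl, rfl, by simp; omega⟩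
    refine ⟨x :: p', hp'.cons hwait, ?_⟩
    rw [project_cons_of_isTransPath hp', if_neg (by simp), List.nil_append, hproj]

lemma IsTempWalk.exists_isTransPath (hT : ∀ e ∈ E, e.2.2 ≤ T) {x y : V × ℕ}
    {q : List (V × V × ℕ)} (h : IsTempWalk E x y q) (hy : y.2 ≤ T) :
    ∃ p, IsTransPath E T x y p ∧ project p = q := by
  induction q generalizing x with
  | nil =>
    obtain ⟨h₁, h₂⟩ := isTempWalk_nil_iff.1 h
    exact (isTransPath_singleton y).exists_wait_prefix h₁ h₂ hy
  | cons e q ih =>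
    obtain ⟨he, h₁, h₂, hq⟩ := isTempWalk_cons_iff.1 h
    obtain ⟨p, hp, rfl⟩ := ih hq
    have hsnap : TransAdj E T (e.1, e.2.2) (e.2.1, e.2.2) := Or.inr ⟨he, rfl⟩
    obtain ⟨p', hp', hproj⟩ := (hp.cons hsnap).exists_wait_prefix h₁ h₂ (hT e he)
    exact ⟨p', hp', by rw [hproj, project_cons_of_isTransPath hp, if_pos rfl]; rfl⟩

lemma sfpDist_le_costL (α : ℝ) {u v : V} {q : List (V × V × ℕ)} (hq : IsTempPath E u v q) :
    sfpDist α E u v ≤ ENNReal.ofReal (costL α q) :=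
  sInf_le ⟨q, hq, rfl⟩

lemma transDist_le_transLen (α : ℝ) {x y : V × ℕ} {p : List (V × ℕ)}
    (hp : IsTransPath E T x y p) : transDist E T α x y ≤ ENNReal.ofReal (transLen α p) :=
  sInf_le ⟨p, hp, rfl⟩

end

theorem stmt2_general (T : ℕ) (E : Set (V × V × ℕ)) (α : ℝ)
    (hT : ∀ e ∈ E, e.2.2 ≤ T) (hα1 : α ≤ 1)
    (u v : V) (huv : u ≠ v) :
    sfpDist α E u v =
      ⨅ (ti : Fin (T + 1)) (tj : Fin (T + 1)),
        transDist E T α (u, (ti : ℕ)) (v, (tj : ℕ)) := by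
  apply le_antisymm
  · refine le_iInf₂ fun ti tj => le_sInf ?_
    rintro c ⟨p, hp, rfl⟩
    have hwalk := hp.isTempWalk_project
    have hne : project p ≠ [] := fun h => huv (isTempWalk_nil_iff.1 (h ▸ hwalk)).1
    obtain ⟨hq, hti, htj⟩ := (isTempWalk_iff_isTempPath hne).1 hwalk
    refine (sfpDist_le_costL α hq).trans (ENNReal.ofReal_le_ofReal ?_)
    rw [hp.transLen_eq, costL]
    have : 0 ≤ 1 - α := by linarith
    gcongr
  · refine le_sInf ?_
    rintro c ⟨q, hq, rfl⟩
    have hqT : ∀ e ∈ q, e.2.2 ≤ T := fun e he => hT e (hq.2.1 e he)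
    have hwalk : IsTempWalk E (u, firstTime q) (v, lastTime q) q :=
      (isTempWalk_iff_isTempPath hq.1).2 ⟨hq, le_rfl, le_rfl⟩
    obtain ⟨p, hp, hproj⟩ := hwalk.exists_isTransPath hT (lastTime_le hq.1 hqT)
    refine iInf₂_le_of_le ⟨firstTime q, Nat.lt_succ_of_le (firstTime_le hq.1 hqT)⟩
      ⟨lastTime q, Nat.lt_succ_of_le (lastTime_le hq.1 hqT)⟩
      ((transDist_le_transLen α hp).trans_eq ?_)
    rw [hp.transLen_eq, hproj, costL]

/-- for distinct vertices `u ≠ v`, the shortest-fastest-path distance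
`d(u,v)` equals the minimum over all pairs of timestamps `t_i, t_j ∈ {0,…,T}` of the
shortest-path distance in the transformed graph `G'` from `(u,t_i)` to `(v,t_j)`. -/
theorem stmt2 (T : ℕ) (E : Set (V × V × ℕ)) (α : ℝ)
    (hsym : ∀ u v t, (u, v, t) ∈ E ↔ (v, u, t) ∈ E)
    (hT : ∀ e ∈ E, e.2.2 ≤ T) (hα0 : 0 ≤ α) (hα1 : α ≤ 1)
    (u v : V) (huv : u ≠ v) :
    sfpDist α E u v =
      ⨅ (ti : Fin (T + 1)) (tj : Fin (T + 1)),
        transDist E T α (u, (ti : ℕ)) (v, (tj : ℕ)) :=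
  stmt2_general T E α hT hα1 u v huv
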